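/- arXiv:1607.02790 — 2 statements merged into one kernel-verified Lean document; each statement's English description precedes it below -/
import Mathlib

section
/- Hyper normalisation is natural in the set parameter for ordinary functions: for every function f : A → B and every ω ∈ D(Fin n × A), N(D(id × f)(ω)) = D(id × D(f))(N(ω)), where id × f : Fin n × A → Fin n × B and id × D(f) : Fin n × D(A) → Fin n × D(B). -/
/-!
Pushing forward along `id × f` only relabels points inside each fibre `{i} × A`, so it
preserves the first marginal `ω[i]`; and on a fibre with `ω[i] ≠ 0` pushing forward commutes
with dividing by `ω[i]`, i.e. `(D(id × f) ω)_i = D(f)(ω_i)`. Both sides of the naturality square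
are therefore the same mixture `Σ_i ω[i] · η(i, D(f)(ω_i))`.
-/

open scoped ENNReal

noncomputable section

namespace HyperNorm

variable {A B : Type*} {n m : ℕ}

/-- `ω[i] = Σ_a ω(i,a)`. -/
def fmass (ω : PMF (Fin n × A)) (i : Fin n) : ℝ≥0∞ := ∑' a, ω (i, a)

lemma tsum_fmass (ω : PMF (Fin n × A)) : ∑' i, fmass ω i = 1 := by
  simp only [fmass]
  rw [← ENNReal.tsum_prod']
  exact ω.tsum_coe

lemma fmass_ne_top (ω : PMF (Fin n × A)) (i : Fin n) : fmass ω i ≠ ⊤ := by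
  apply ne_top_of_le_ne_top ENNReal.one_ne_top
  rw [← tsum_fmass ω]
  exact ENNReal.le_tsum i

/-- The first marginal `i ↦ ω[i]` as a distribution. -/
def fstM (ω : PMF (Fin n × A)) : PMF (Fin n) :=
  ⟨fun i => fmass ω i, ENNReal.summable.hasSum_iff.mpr (tsum_fmass ω)⟩

/-- The normalised `i`-th component `ω_i(a) = ω(i,a)/ω[i]` (junk value if `ω[i] = 0`,
which never contributes to `hnorm` below since it is weighted by `ω[i] = 0`). -/
def ncond (ω : PMF (Fin n × A)) (i : Fin n) : PMF A :=
  if h : fmass ω i ≠ 0 then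
    ⟨fun a => ω (i, a) / fmass ω i,
      ENNReal.summable.hasSum_iff.mpr (by
        simp only [div_eq_mul_inv]
        rw [ENNReal.tsum_mul_right, ← div_eq_mul_inv]
        exact ENNReal.div_self h (fmass_ne_top ω i))⟩
  else PMF.pure (ω.support_nonempty.some.2)

/-- Hyper normalisation `N(ω) = Σ_{i with ω[i] ≠ 0} ω[i]·η(i, ω_i)`. -/
def hnorm (ω : PMF (Fin n × A)) : PMF (Fin n × PMF A) :=
  (fstM ω).bind fun i => PMF.pure (i, ncond ω i)

/-- Graph map `gr(f)(x)(y,x') = f(x)(y) if x' = x, else 0`. -/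
def gr {X Y : Type*} (f : X → PMF Y) : X → PMF (Y × X) :=
  fun x => (f x).map fun y => (y, x)

lemma _root_.PMF.bind_congr_of_mem_support {α β : Type*} {p : PMF α} {f g : α → PMF β}
    (h : ∀ a ∈ p.support, f a = g a) : p.bind f = p.bind g := by
  ext b
  simp only [PMF.bind_apply]
  refine tsum_congr fun a => ?_
  by_cases ha : p a = 0
  · simp [ha]
  · rw [h a ha]

open scoped Classical in
lemma map_prodMap_id_apply (f : A → B) (ω : PMF (Fin n × A)) (i : Fin n) (b : B) :
    (ω.map fun p => (p.1, f p.2)) (i, b) = ∑' a, if b = f a then ω (i, a) else 0 := by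
  rw [PMF.map_apply, ENNReal.tsum_prod',
    tsum_eq_single i fun j hj => by simp [Prod.ext_iff, Ne.symm hj]]
  simp [Prod.ext_iff]

lemma fmass_map (f : A → B) (ω : PMF (Fin n × A)) (i : Fin n) :
    fmass (ω.map fun p => (p.1, f p.2)) i = fmass ω i := by
  simp only [fmass, map_prodMap_id_apply]
  rw [ENNReal.tsum_comm]
  simp

lemma fstM_map (f : A → B) (ω : PMF (Fin n × A)) :
    fstM (ω.map fun p => (p.1, f p.2)) = fstM ω :=
  PMF.ext (fmass_map f ω)

lemma ncond_apply {ω : PMF (Fin n × A)} {i : Fin n} (h : fmass ω i ≠ 0) (a : A) :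
    ncond ω i a = ω (i, a) / fmass ω i := by
  simp only [ncond, ne_eq, h, not_false_eq_true, ↓reduceDIte]
  rfl

lemma ncond_map (f : A → B) (ω : PMF (Fin n × A)) {i : Fin n} (h : fmass ω i ≠ 0) :
    ncond (ω.map fun p => (p.1, f p.2)) i = (ncond ω i).map f := by
  have h' : fmass (ω.map fun p => (p.1, f p.2)) i ≠ 0 := by rwa [fmass_map]
  ext b
  rw [ncond_apply h', map_prodMap_id_apply, fmass_map, PMF.map_apply, div_eq_mul_inv,
    ← ENNReal.tsum_mul_right]
  refine tsum_congr fun a => ?_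
  split_ifs <;> simp [ncond_apply h, div_eq_mul_inv]

/-- naturality of `N` for ordinary functions:
`N(D(id × f)(ω)) = D(id × D(f))(N(ω))`. -/
theorem hnorm_natural (f : A → B) (ω : PMF (Fin n × A)) :
    hnorm (ω.map fun p => (p.1, f p.2)) = (hnorm ω).map fun p => (p.1, p.2.map f) := by
  calc hnorm (ω.map fun p => (p.1, f p.2))
      = (fstM ω).bind fun i => PMF.pure (i, ncond (ω.map fun p => (p.1, f p.2)) i) := by
        rw [hnorm, fstM_map]
    _ = (fstM ω).bind fun i => PMF.pure (i, (ncond ω i).map f) :=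
        PMF.bind_congr_of_mem_support fun i hi => by rw [ncond_map f ω hi]
    _ = (hnorm ω).map fun p => (p.1, p.2.map f) := by
        simp only [hnorm, PMF.map_bind, PMF.pure_map]

end HyperNorm
end
end

section
/- Formula for hyper conditioning in terms of traditional conditioning: for every ω ∈ D(A) and every n-test t : A → D(Fin n) with component predicates p_i(a) = t(a)(i), the hyper conditional satisfies ω‖t = Σ_{i with ω ⊨ p_i ≠ 0} (ω ⊨ p_i)·η(i, ω|p_i), where ω|p_i is the traditionally normalised conditional distribution. -/
/-!
The joint state `gr(t)_*(ω)` has `(i, a)`-entry `ω(a)·t(a)(i)`. Hence its `i`-th marginal is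
the validity `ω ⊨ p_i` and its normalised `i`-th component is the conditional `ω|p_i`, and
hyper normalisation only depends on these two pieces of data.
-/

open scoped ENNReal

noncomputable section

namespace HyperNorm

variable {A B : Type*} {n m : ℕ}

lemma bind_gr_apply {X Y : Type*} (ω : PMF X) (f : X → PMF Y) (y : Y) (x : X) :
    ω.bind (gr f) (y, x) = ω x * f x y := by
  rw [PMF.bind_apply, tsum_eq_single x fun x' hx' => ?_]
  · rw [gr, PMF.map_apply,
      tsum_eq_single y fun y' hy' => if_neg fun h => hy' (Prod.ext_iff.1 h).1.symm, if_pos rfl]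
  · simp [gr, PMF.map_apply, Ne.symm hx']

lemma fmass_bind_gr (ω : PMF A) (t : A → PMF (Fin n)) (i : Fin n) :
    fmass (ω.bind (gr t)) i = ∑' a, ω a * t a i := by
  simp only [fmass, bind_gr_apply]

lemma ncond_apply_of_fmass_ne_zero {ω : PMF (Fin n × A)} {i : Fin n} (hi : fmass ω i ≠ 0)
    (a : A) : ncond ω i a = ω (i, a) / fmass ω i := by
  rw [show ncond ω i = _ from dif_pos hi]
  rfl

lemma hnorm_eq_bind_pure {ω : PMF (Fin n × A)} {v : PMF (Fin n)} {c : Fin n → PMF A}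
    (hv : ∀ i, fmass ω i = v i) (hc : ∀ i, v i ≠ 0 → ncond ω i = c i) :
    hnorm ω = v.bind fun i => PMF.pure (i, c i) := by
  have hfst : fstM ω = v := PMF.ext hv
  ext x
  simp only [hnorm, hfst, PMF.bind_apply]
  refine tsum_congr fun i => ?_
  by_cases hi : v i = 0
  · simp [hi]
  · rw [hc i hi]

/-- `ω‖t = Σ_{i with ω ⊨ p_i ≠ 0} (ω ⊨ p_i)·η(i, ω|p_i)`, where
`p_i(a) = t(a)(i)`, `ω ⊨ p_i = Σ_a ω(a)·t(a)(i)`, the outer distribution `v` has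
`v(i) = ω ⊨ p_i`, and `c i` is the conditional `ω|p_i` whenever `ω ⊨ p_i ≠ 0`. -/
theorem hypcond_formula (ω : PMF A) (t : A → PMF (Fin n))
    (v : PMF (Fin n)) (hv : ∀ i, v i = ∑' a, ω a * t a i)
    (c : Fin n → PMF A)
    (hc : ∀ i, (∑' a, ω a * t a i) ≠ 0 →
      ∀ a, c i a = ω a * t a i / ∑' a', ω a' * t a' i) :
    hnorm (ω.bind (gr t)) = v.bind fun i => PMF.pure (i, c i) := by
  have hmass : ∀ i, fmass (ω.bind (gr t)) i = v i := fun i =>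
    (fmass_bind_gr ω t i).trans (hv i).symm
  refine hnorm_eq_bind_pure hmass fun i hi => PMF.ext fun a => ?_
  rw [ncond_apply_of_fmass_ne_zero ((hmass i).trans_ne hi), bind_gr_apply, hmass i, hv i,
    hc i ((hv i).symm.trans_ne hi) a]

end HyperNorm
end
end
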